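/- For all 3×3 Hermitian complex matrices A and C and every 3×3 complex matrix B, the quantity Φ := 4(|A|² + |C|² + 2|B|²) - □' - (1/12)(tr A + tr C)² is nonnegative, where □' = -(1/2)⟨A+C, A+C⟩ - (1/2)(⟨A,A⟩ + ⟨C,C⟩ + ⟨B,B*⟩ + ⟨B*,B⟩) + (tr A)² + (tr C)² + 2|tr B|² + |A+C|², with ⟨X,Y⟩ := ∑_{i,j=1}^3 X_{ij} Y_{(4-i)(4-j)}. -/

import Mathlib

/-!
Put `u = A + C`, `v = A - C` and let `τ X = J Xᵀ J` be the anti-transpose (`J` the anti-diagonal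
permutation matrix); `τ` preserves `|·|` and the trace. The pairing `⟨X, X*⟩` is the
Hilbert–Schmidt inner product of `X` with `τ X`, so `|X ± τ X|² = 2|X|² ± 2 Re ⟨X, X*⟩`. Hence
`Re ⟨X, X*⟩ ≤ |X|²`, and Cauchy–Schwarz applied to `tr (X + τ X) = 2 tr X` gives
`|tr X|² ≤ (3/2)(|X|² + Re ⟨X, X*⟩)`. By the parallelogram law `Φ` is the sum of
`8|B|² + Re ⟨B, B*⟩ - 2|tr B|²`, `|u|² + (3/4)⟨u, u⟩ - (7/12)(tr u)²` and
`2|v|² + (1/4)⟨v, v⟩ - (1/2)(tr v)²`, each of which is nonnegative by these two bounds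
(the middle one vanishes at `u = 1`).
-/

open Matrix
open scoped ComplexOrder

/-- The anti-diagonal pairing `⟨X, Y⟩ = ∑ X_{ij} Y_{(4-i)(4-j)}` (1-based;
`Fin.rev` in 0-based indexing) on `3×3` complex matrices. -/
noncomputable def apair (X Y : Matrix (Fin 3) (Fin 3) ℂ) : ℂ :=
  ∑ i, ∑ j, X i j * Y i.rev j.rev

/-- The squared Hilbert–Schmidt norm `|X|² = ∑ |X_{ij}|²`. -/
noncomputable def hsNormSq (X : Matrix (Fin 3) (Fin 3) ℂ) : ℝ :=
  ∑ i, ∑ j, ‖X i j‖ ^ 2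

namespace Matrix

variable {α : Type*} {n : ℕ}

def antiTranspose (X : Matrix (Fin n) (Fin n) α) : Matrix (Fin n) (Fin n) α :=
  Xᵀ.submatrix Fin.rev Fin.rev

@[simp]
theorem antiTranspose_apply (X : Matrix (Fin n) (Fin n) α) (i j : Fin n) :
    X.antiTranspose i j = X j.rev i.rev :=
  rfl

@[simp]
theorem trace_antiTranspose [AddCommMonoid α] (X : Matrix (Fin n) (Fin n) α) :
    X.antiTranspose.trace = X.trace :=
  Fintype.sum_equiv Fin.revPerm _ _ fun _ => rfl

theorem IsHermitian.ofReal_re_trace {ι : Type*} [Fintype ι] {X : Matrix ι ι ℂ}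
    (hX : X.IsHermitian) : (X.trace.re : ℂ) = X.trace := by
  rw [← Complex.conj_eq_iff_re, ← Complex.star_def, ← trace_conjTranspose, hX.eq]

end Matrix

section HilbertSchmidt

variable (X Y : Matrix (Fin 3) (Fin 3) ℂ)

theorem hsNormSq_nonneg : 0 ≤ hsNormSq X := by
  unfold hsNormSq
  positivity

theorem hsNormSq_antiTranspose : hsNormSq X.antiTranspose = hsNormSq X := by
  simp only [hsNormSq, antiTranspose_apply]
  rw [Finset.sum_comm]
  exact Fintype.sum_equiv Fin.revPerm _ _ fun i =>
    Fintype.sum_equiv Fin.revPerm _ _ fun j => rfl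

theorem hsNormSq_add :
    hsNormSq (X + Y) = hsNormSq X + hsNormSq Y + 2 * (X * Yᴴ).trace.re := by
  simp only [hsNormSq, trace, diag_apply, mul_apply, conjTranspose_apply, Matrix.add_apply,
    Complex.sq_norm, Complex.normSq_add, Complex.re_sum, Finset.sum_add_distrib, Finset.mul_sum]
  rfl

theorem hsNormSq_sub :
    hsNormSq (X - Y) = hsNormSq X + hsNormSq Y - 2 * (X * Yᴴ).trace.re := by
  simp only [hsNormSq, trace, diag_apply, mul_apply, conjTranspose_apply, Matrix.sub_apply,
    Complex.sq_norm, Complex.normSq_sub, Complex.re_sum, Finset.sum_add_distrib,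
    Finset.sum_sub_distrib, Finset.mul_sum]
  rfl

theorem hsNormSq_add_add_hsNormSq_sub :
    hsNormSq (X + Y) + hsNormSq (X - Y) = 2 * (hsNormSq X + hsNormSq Y) := by
  rw [hsNormSq_add, hsNormSq_sub]
  ring

theorem norm_trace_sq_le_three_mul_hsNormSq : ‖X.trace‖ ^ 2 ≤ 3 * hsNormSq X :=
  calc ‖X.trace‖ ^ 2 ≤ (∑ i, ‖X i i‖) ^ 2 := by gcongr; exact norm_sum_le _ _
    _ ≤ 3 * ∑ i, ‖X i i‖ ^ 2 := by
      simpa using sq_sum_le_card_mul_sum_sq (s := Finset.univ) (f := fun i => ‖X i i‖)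
    _ ≤ 3 * hsNormSq X := by
      rw [hsNormSq]
      gcongr with i
      exact Finset.single_le_sum (f := fun j => ‖X i j‖ ^ 2) (fun _ _ => by positivity)
        (Finset.mem_univ i)

end HilbertSchmidt

section AntiDiagonalPairing

variable (X Y : Matrix (Fin 3) (Fin 3) ℂ)

theorem apair_conjTranspose_eq_trace : apair X Xᴴ = (X * X.antiTransposeᴴ).trace := by
  simp [apair, trace, mul_apply]

theorem star_apair_conjTranspose : star (apair X Xᴴ) = apair Xᴴ X := by
  simp only [apair, conjTranspose_apply, star_sum, star_mul', star_star]
  rw [Finset.sum_comm]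

theorem apair_conjTranspose_add_swap :
    apair X Xᴴ + apair Xᴴ X = ((2 * (apair X Xᴴ).re : ℝ) : ℂ) := by
  rw [← star_apair_conjTranspose, Complex.star_def, Complex.add_conj]

theorem apair_add_self_add_apair_sub_self :
    apair (X + Y) (X + Y) + apair (X - Y) (X - Y) = 2 * (apair X X + apair Y Y) := by
  simp only [apair, Finset.mul_sum, ← Finset.sum_add_distrib, Matrix.add_apply, Matrix.sub_apply]
  exact Finset.sum_congr rfl fun i _ => Finset.sum_congr rfl fun j _ => by ring

theorem re_apair_conjTranspose_le : (apair X Xᴴ).re ≤ hsNormSq X := by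
  have h := hsNormSq_nonneg (X - X.antiTranspose)
  rw [hsNormSq_sub, hsNormSq_antiTranspose, ← apair_conjTranspose_eq_trace] at h
  linarith

theorem norm_trace_sq_le_hsNormSq_add_re_apair :
    ‖X.trace‖ ^ 2 ≤ 3 / 2 * (hsNormSq X + (apair X Xᴴ).re) := by
  have h := norm_trace_sq_le_three_mul_hsNormSq (X + X.antiTranspose)
  rw [hsNormSq_add, hsNormSq_antiTranspose, ← apair_conjTranspose_eq_trace, trace_add,
    trace_antiTranspose, ← two_mul, norm_mul, mul_pow] at h
  norm_num at h
  linarith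

variable {X}

theorem Matrix.IsHermitian.ofReal_re_apair_self (hX : X.IsHermitian) :
    ((apair X X).re : ℂ) = apair X X := by
  have h := star_apair_conjTranspose X
  rw [hX.eq] at h
  exact Complex.conj_eq_iff_re.mp h

theorem Matrix.IsHermitian.re_apair_self_le (hX : X.IsHermitian) :
    (apair X X).re ≤ hsNormSq X := by
  simpa only [hX.eq] using re_apair_conjTranspose_le X

theorem Matrix.IsHermitian.re_trace_sq_le (hX : X.IsHermitian) :
    X.trace.re ^ 2 ≤ 3 / 2 * (hsNormSq X + (apair X X).re) := by
  have h := norm_trace_sq_le_hsNormSq_add_re_apair X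
  rwa [hX.eq, ← hX.ofReal_re_trace, Complex.norm_real, Real.norm_eq_abs, sq_abs] at h

end AntiDiagonalPairing

theorem stmt14 (A C B : Matrix (Fin 3) (Fin 3) ℂ)
    (hA : A.IsHermitian) (hC : C.IsHermitian) :
    0 ≤ 4 * ((hsNormSq A + hsNormSq C + 2 * hsNormSq B : ℝ) : ℂ)
      - (-(1/2) * apair (A + C) (A + C)
          - (1/2) * (apair A A + apair C C + apair B Bᴴ + apair Bᴴ B)
          + A.trace ^ 2 + C.trace ^ 2
          + 2 * ((‖B.trace‖ ^ 2 : ℝ) : ℂ)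
          + ((hsNormSq (A + C) : ℝ) : ℂ))
      - (1/12) * (A.trace + C.trace) ^ 2 := by
  rw [add_assoc (apair A A + apair C C), apair_conjTranspose_add_swap,
    ← hA.ofReal_re_trace, ← hC.ofReal_re_trace, ← hA.ofReal_re_apair_self,
    ← hC.ofReal_re_apair_self, ← (hA.add hC).ofReal_re_apair_self,
    show (1 / 2 : ℂ) = ((1 / 2 : ℝ) : ℂ) by norm_num,
    show (1 / 12 : ℂ) = ((1 / 12 : ℝ) : ℂ) by norm_num]
  norm_cast
  have hsum := (hA.add hC).re_trace_sq_le
  have hdiff := (hA.sub hC).re_trace_sq_le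
  rw [trace_add, Complex.add_re] at hsum
  rw [trace_sub, Complex.sub_re] at hdiff
  have hpair := congrArg Complex.re (apair_add_self_add_apair_sub_self A C)
  simp only [Complex.add_re, Complex.mul_re, Complex.re_ofNat, Complex.im_ofNat, zero_mul,
    sub_zero] at hpair
  linarith [hsNormSq_add_add_hsNormSq_sub A C, re_apair_conjTranspose_le B,
    norm_trace_sq_le_hsNormSq_add_re_apair B, (hA.add hC).re_apair_self_le,
    (hA.sub hC).re_apair_self_le, hsNormSq_nonneg B, hsNormSq_nonneg (A - C)]
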